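/- Let Ω ⊆ ℝ³ be a measurable set of finite measure, let U be an open neighborhood of the identity matrix I in ℝ^{3×3}, and let W : U → ℝ be of class C² with W ≥ 0 and W(I) = 0 (so that the derivative of W at I vanishes). Let (G_h)_{h>0} be measurable maps G_h : Ω → ℝ^{3×3} with sup_h ess-sup_Ω |G_h| < ∞, converging as h → 0 to a map G in the sense that ess-sup_Ω |G_h − G| → 0. Then lim_{h→0} h^{−2} ∫_Ω W(I + h G_h(x)) dx = (1/2) ∫_Ω Q₃(G(x)) dx, where Q₃(F) := D²W(I)[F,F] is the second derivative of W at I applied twice to F. -/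

import Mathlib

/-! Since `W ≥ 0 = W(I)`, the identity is a critical point of `W`, so Taylor's formula with
Peano remainder gives `W(I + A) = ½ D²W(I)[A, A] + o(|A|²)`; after rescaling,
`h⁻² W(I + h A) → ½ Q₃(A)` uniformly for `A` in a ball. The maps `G_h` take values in such a ball
and converge to `G` uniformly a.e., and `Q₃` is uniformly continuous on the ball, so the integrands
`h⁻² W(I + h G_h)` converge to `½ Q₃(G)` in `L^∞(Ω)`, hence in `L¹(Ω)` as `Ω` has finite
measure. -/

open MeasureTheory
open scoped ENNReal

noncomputable section

/-- We identify `ℝ^{3×3}` with the `Pi` type `Fin 3 → Fin 3 → ℝ`. -/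
abbrev Mat3 : Type := Fin 3 → Fin 3 → ℝ

def Id3 : Mat3 := fun i j => if i = j then 1 else 0

def frob3 (F : Mat3) : ℝ := Real.sqrt (∑ i, ∑ j, (F i j) ^ 2)

open Filter Topology Metric Set Asymptotics

theorem norm_le_frob3 (F : Mat3) : ‖F‖ ≤ frob3 F := by
  refine (pi_norm_le_iff_of_nonneg (Real.sqrt_nonneg _)).2 fun i =>
    (pi_norm_le_iff_of_nonneg (Real.sqrt_nonneg _)).2 fun j => Real.abs_le_sqrt ?_
  exact (Finset.single_le_sum (fun j _ => sq_nonneg (F i j)) (Finset.mem_univ j)).trans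
    (Finset.single_le_sum (f := fun i => ∑ j, F i j ^ 2)
      (fun i _ => Finset.sum_nonneg fun j _ => sq_nonneg (F i j)) (Finset.mem_univ i))

theorem TendstoUniformlyOn.mono_left {ι α β : Type*} [UniformSpace β] {F : ι → α → β}
    {f : α → β} {p p' : Filter ι} {s : Set α} (h : TendstoUniformlyOn F f p s) (hp : p' ≤ p) :
    TendstoUniformlyOn F f p' s :=
  fun u hu => hp (h u hu)

section Taylor

variable {E : Type*} [NormedAddCommGroup E] [NormedSpace ℝ E]

theorem HasFDerivAt.isLittleO_taylor_two {f : E → ℝ} {f' : E → E →L[ℝ] ℝ}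
    {f'' : E →L[ℝ] E →L[ℝ] ℝ} {x : E} (hf' : HasFDerivAt f' f'' x)
    (hf : ∀ᶠ y in 𝓝 x, HasFDerivAt f (f' y) y) :
    (fun A => f (x + A) - f x - f' x A - 1 / 2 * f'' A A) =o[𝓝 0] fun A => ‖A‖ ^ 2 := by
  refine isLittleO_iff.2 fun c hc => ?_
  have hf₀ : ∀ᶠ B in 𝓝 0, HasFDerivAt f (f' (x + B)) (x + B) :=
    (continuous_const_add x).tendsto' 0 x (add_zero x) |>.eventually hf
  obtain ⟨r, hr, hball⟩ := eventually_nhds_iff_ball.1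
    (hf₀.and ((hasFDerivAt_iff_isLittleO_nhds_zero.1 hf').def hc))
  filter_upwards [ball_mem_nhds 0 hr] with A hA
  have hseg : ∀ t ∈ Icc (0 : ℝ) 1, t • A ∈ ball (0 : E) r := fun t ht =>
    (convex_ball (0 : E) r).smul_mem_of_zero_mem (mem_ball_self hr) hA ht
  let φ : ℝ → ℝ := fun t => f (x + t • A) - t * f' x A - t ^ 2 / 2 * f'' A A
  have hφ : ∀ t ∈ Icc (0 : ℝ) 1,
      HasDerivWithinAt φ ((f' (x + t • A) - f' x - f'' (t • A)) A) (Icc 0 1) t := by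
    intro t ht
    have hline : HasDerivAt (fun t : ℝ => x + t • A) A t := by
      simpa using ((hasDerivAt_id t).smul_const A).const_add x
    have hderiv := (((hball _ (hseg t ht)).1.comp_hasDerivAt t hline).sub
      ((hasDerivAt_id t).mul_const (f' x A))).sub
      (((hasDerivAt_pow 2 t).div_const 2).mul_const (f'' A A))
    refine (hderiv.congr_deriv ?_).hasDerivWithinAt
    simp only [map_smul, sub_apply, smul_apply, smul_eq_mul]
    ring
  have hbound : ∀ t ∈ Ico (0 : ℝ) 1, ‖(f' (x + t • A) - f' x - f'' (t • A)) A‖ ≤ c * ‖A‖ ^ 2 := by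
    intro t ht
    have hclose := (hball _ (hseg t (Ico_subset_Icc_self ht))).2
    calc ‖(f' (x + t • A) - f' x - f'' (t • A)) A‖
        ≤ ‖f' (x + t • A) - f' x - f'' (t • A)‖ * ‖A‖ := ContinuousLinearMap.le_opNorm _ _
      _ ≤ c * ‖t • A‖ * ‖A‖ := by gcongr
      _ ≤ c * ‖A‖ * ‖A‖ := by
        gcongr
        rw [norm_smul, Real.norm_of_nonneg ht.1]
        exact mul_le_of_le_one_left (norm_nonneg A) ht.2.le
      _ = c * ‖A‖ ^ 2 := by ring
  have hφ₁₀ : φ 1 - φ 0 = f (x + A) - f x - f' x A - 1 / 2 * f'' A A := by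
    simp only [φ, one_smul, zero_smul, add_zero, one_mul, zero_mul, one_pow]
    ring
  rw [norm_pow, norm_norm, ← hφ₁₀]
  exact norm_image_sub_le_of_norm_deriv_le_segment_01' hφ hbound

theorem ContDiffAt.isLittleO_taylor_two {f : E → ℝ} {x : E} (hf : ContDiffAt ℝ 2 f x) :
    (fun A => f (x + A) - f x - fderiv ℝ f x A - 1 / 2 * fderiv ℝ (fderiv ℝ f) x A A)
      =o[𝓝 0] fun A => ‖A‖ ^ 2 :=
  ((hf.fderiv_right (m := 1) (by norm_num)).differentiableAt (by norm_num)).hasFDerivAt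
    |>.isLittleO_taylor_two
      ((hf.eventually (by simp)).mono fun y hy => (hy.differentiableAt (by norm_num)).hasFDerivAt)

theorem eventually_forall_closedBall_smul {P : E → Prop} (hP : ∀ᶠ A in 𝓝 0, P A) (K : ℝ) :
    ∀ᶠ h in 𝓝 (0 : ℝ), ∀ A ∈ closedBall (0 : E) K, P (h • A) := by
  obtain ⟨r, hr, hball⟩ := eventually_nhds_iff_ball.1 hP
  filter_upwards [ball_mem_nhds (0 : ℝ) (show 0 < r / (|K| + 1) by positivity)] with h hh A hA
  apply hball
  rw [mem_ball_zero_iff, norm_smul]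
  rw [mem_ball_zero_iff, Real.norm_eq_abs, lt_div_iff₀ (by positivity)] at hh
  rw [mem_closedBall_zero_iff] at hA
  calc ‖h‖ * ‖A‖ ≤ |h| * (|K| + 1) := by
        rw [Real.norm_eq_abs]; gcongr; linarith [le_abs_self K]
    _ < r := hh

theorem tendstoUniformlyOn_inv_sq_mul_comp_smul {φ ψ : E → ℝ}
    (hψ : ∀ (t : ℝ) (A : E), ψ (t • A) = t ^ 2 * ψ A)
    (hφ : (fun A => φ A - ψ A) =o[𝓝 0] fun A => ‖A‖ ^ 2) (K : ℝ) :
    TendstoUniformlyOn (fun (h : ℝ) A => (h ^ 2)⁻¹ * φ (h • A)) ψ (𝓝[≠] 0) (closedBall 0 K) := by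
  refine Metric.tendstoUniformlyOn_iff.2 fun ε hε => ?_
  have hc : 0 < ε / (2 * (K ^ 2 + 1)) := by positivity
  filter_upwards [self_mem_nhdsWithin,
    nhdsWithin_le_nhds (eventually_forall_closedBall_smul (hφ.def hc) K)]
    with h (hh : h ≠ 0) hsmall A hA
  have hh2 : 0 < h ^ 2 := by positivity
  have hA2 : ‖A‖ ^ 2 ≤ K ^ 2 := by
    have := mem_closedBall_zero_iff.1 hA
    nlinarith [norm_nonneg A]
  have hrem := hsmall A hA
  rw [hψ, norm_pow, norm_norm, norm_smul, mul_pow] at hrem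
  simp only [Real.norm_eq_abs, sq_abs] at hrem
  rw [dist_comm, Real.dist_eq]
  calc |(h ^ 2)⁻¹ * φ (h • A) - ψ A| = |(h ^ 2)⁻¹ * (φ (h • A) - h ^ 2 * ψ A)| := by
        congr 1; field_simp
    _ = (h ^ 2)⁻¹ * |φ (h • A) - h ^ 2 * ψ A| := by rw [abs_mul, abs_of_pos (inv_pos.2 hh2)]
    _ ≤ (h ^ 2)⁻¹ * (ε / (2 * (K ^ 2 + 1)) * (h ^ 2 * ‖A‖ ^ 2)) := by gcongr
    _ = ε / (2 * (K ^ 2 + 1)) * ‖A‖ ^ 2 := by field_simp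
    _ ≤ ε / (2 * (K ^ 2 + 1)) * (K ^ 2 + 1) := by gcongr; linarith
    _ < ε := by field_simp; linarith

theorem ContDiffAt.tendstoUniformlyOn_inv_sq_mul_sub {f : E → ℝ} {x : E}
    (hf : ContDiffAt ℝ 2 f x) (hcrit : fderiv ℝ f x = 0) (K : ℝ) :
    TendstoUniformlyOn (fun (h : ℝ) A => (h ^ 2)⁻¹ * (f (x + h • A) - f x))
      (fun A => 1 / 2 * fderiv ℝ (fderiv ℝ f) x A A) (𝓝[≠] 0) (closedBall 0 K) := by
  refine tendstoUniformlyOn_inv_sq_mul_comp_smul (φ := fun A => f (x + A) - f x)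
    (fun t A => ?_) ?_ K
  · simp only [map_smul, smul_apply, smul_eq_mul]
    ring
  · simpa only [hcrit, zero_apply, sub_zero] using hf.isLittleO_taylor_two

end Taylor

theorem ContinuousOn.aestronglyMeasurable_comp {α β γ : Type*} [MeasurableSpace α]
    {μ : Measure α} [TopologicalSpace β] [MeasurableSpace β] [OpensMeasurableSpace β]
    [TopologicalSpace γ] [TopologicalSpace.PseudoMetrizableSpace γ]
    [SecondCountableTopologyEither β γ]
    {W : β → γ} {U : Set β} (hW : ContinuousOn W U) (hU : MeasurableSet U) {g : α → β}
    (hg : AEMeasurable g μ) (hgU : ∀ᵐ x ∂μ, g x ∈ U) :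
    AEStronglyMeasurable (fun x => W (g x)) μ := by
  have hWm : AEStronglyMeasurable W (μ.map g) := by
    rw [← Measure.restrict_eq_self_of_ae_mem ((ae_map_iff hg hU).2 hgU)]
    exact hW.aestronglyMeasurable hU
  exact hWm.comp_aemeasurable hg

section UniformAE

variable {α ι E : Type*} [MeasurableSpace α] {μ : Measure α} {l : Filter ι}

/-- `ess-sup ‖G i - g‖ → 0` along `l`: convergence in `L^∞(μ)`. -/
def TendstoUniformlyAE [PseudoMetricSpace E] (G : ι → α → E) (g : α → E) (l : Filter ι)
    (μ : Measure α) : Prop :=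
  ∀ ε > 0, ∀ᶠ i in l, ∀ᵐ x ∂μ, dist (G i x) (g x) ≤ ε

namespace TendstoUniformlyAE

section PseudoMetric

variable [PseudoMetricSpace E] {G : ι → α → E} {g : α → E}

theorem exists_seq_tendsto_ae [l.NeBot] (hG : TendstoUniformlyAE G g l μ) {p : ι → Prop}
    (hp : ∀ᶠ i in l, p i) :
    ∃ i : ℕ → ι, (∀ n, p (i n)) ∧ ∀ᵐ x ∂μ, Tendsto (fun n => G (i n) x) atTop (𝓝 (g x)) := by
  have : ∀ n : ℕ, ∃ i, p i ∧ ∀ᵐ x ∂μ, dist (G i x) (g x) ≤ 1 / (n + 1) := fun n =>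
    (hp.and (hG _ Nat.one_div_pos_of_nat)).exists
  choose i hpi hi using this
  refine ⟨i, hpi, (ae_all_iff.2 hi).mono fun x hx => ?_⟩
  exact tendsto_iff_dist_tendsto_zero.2
    (squeeze_zero (fun n => dist_nonneg) hx tendsto_one_div_add_atTop_nhds_zero_nat)

theorem aestronglyMeasurable [l.NeBot] (hG : TendstoUniformlyAE G g l μ)
    (hGm : ∀ᶠ i in l, AEStronglyMeasurable (G i) μ) : AEStronglyMeasurable g μ := by
  obtain ⟨i, hi, hlim⟩ := hG.exists_seq_tendsto_ae hGm
  exact aestronglyMeasurable_of_tendsto_ae atTop hi hlim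

theorem ae_mem [l.NeBot] (hG : TendstoUniformlyAE G g l μ) {s : Set E} (hs : IsClosed s)
    (hGs : ∀ᶠ i in l, ∀ᵐ x ∂μ, G i x ∈ s) : ∀ᵐ x ∂μ, g x ∈ s := by
  obtain ⟨i, hi, hlim⟩ := hG.exists_seq_tendsto_ae hGs
  filter_upwards [hlim, ae_all_iff.2 hi] with x hx hxs
  exact hs.mem_of_tendsto hx (Eventually.of_forall hxs)

theorem comp_tendstoUniformlyOn {F : Type*} [PseudoMetricSpace F] {Φ : ι → E → F} {φ : E → F}
    {s : Set E} (hG : TendstoUniformlyAE G g l μ) (hGs : ∀ᶠ i in l, ∀ᵐ x ∂μ, G i x ∈ s)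
    (hgs : ∀ᵐ x ∂μ, g x ∈ s) (hΦ : TendstoUniformlyOn Φ φ l s) (hφ : UniformContinuousOn φ s) :
    TendstoUniformlyAE (fun i x => Φ i (G i x)) (fun x => φ (g x)) l μ := by
  intro ε hε
  obtain ⟨δ, hδ, hφδ⟩ := uniformContinuousOn_iff_le.1 hφ (ε / 2) (half_pos hε)
  filter_upwards [tendstoUniformlyOn_iff.1 hΦ (ε / 2) (half_pos hε), hG δ hδ, hGs]
    with i hΦi hGi hGsi
  filter_upwards [hGi, hGsi, hgs] with x hx hxs hgxs
  calc dist (Φ i (G i x)) (φ (g x))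
      ≤ dist (Φ i (G i x)) (φ (G i x)) + dist (φ (G i x)) (φ (g x)) := dist_triangle _ _ _
    _ ≤ ε / 2 + ε / 2 := by
      gcongr
      · exact (dist_comm (Φ i (G i x)) _ ▸ hΦi _ hxs).le
      · exact hφδ _ hxs _ hgxs hx
    _ = ε := add_halves ε

end PseudoMetric

theorem tendsto_integral [NormedAddCommGroup E] [NormedSpace ℝ E] [IsFiniteMeasure μ] [l.NeBot]
    {F : ι → α → E} {f : α → E} (hF : TendstoUniformlyAE F f l μ)
    (hFm : ∀ᶠ i in l, AEStronglyMeasurable (F i) μ) :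
    Tendsto (fun i => ∫ x, F i x ∂μ) l (𝓝 (∫ x, f x ∂μ)) := by
  have hfm := hF.aestronglyMeasurable hFm
  have hclose : ∀ η > 0, ∀ᶠ i in l,
      Integrable (F i - f) μ ∧ ∀ᵐ x ∂μ, ‖F i x - f x‖ ≤ η := fun η hη => by
    filter_upwards [hF η hη, hFm] with i hi hm
    have hi' : ∀ᵐ x ∂μ, ‖F i x - f x‖ ≤ η :=
      hi.mono fun x hx => (dist_eq_norm _ _).symm.trans_le hx
    exact ⟨.of_bound (hm.sub hfm) η hi', hi'⟩
  by_cases hf : Integrable f μ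
  · refine Metric.tendsto_nhds.2 fun ε hε => ?_
    have hη : 0 < ε / (μ.real univ + 1) := by positivity
    filter_upwards [hclose _ hη] with i hi
    rw [dist_eq_norm, ← integral_sub (by simpa using hi.1.add hf) hf]
    calc ‖∫ x, F i x - f x ∂μ‖ ≤ ε / (μ.real univ + 1) * μ.real univ :=
          norm_integral_le_of_norm_le_const hi.2
      _ < ε := by
        rw [div_mul_eq_mul_div, div_lt_iff₀ (by positivity)]
        nlinarith
  -- otherwise no `F i` close to `f` is integrable either, and all these integrals are `0`
  · refine tendsto_const_nhds.congr' ?_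
    filter_upwards [hclose 1 one_pos] with i hi
    rw [integral_undef hf, integral_undef fun hFi => hf (by simpa using hFi.sub hi.1)]

end TendstoUniformlyAE

end UniformAE

theorem stmt16 (Ω : Set (Fin 3 → ℝ)) (hΩfin : volume Ω < ⊤)
    (U : Set Mat3) (hUopen : IsOpen U) (hIU : Id3 ∈ U)
    (W : Mat3 → ℝ) (hWC2 : ContDiffOn ℝ 2 W U)
    (hWnonneg : ∀ F ∈ U, 0 ≤ W F) (hWI : W Id3 = 0)
    (G : ℝ → (Fin 3 → ℝ) → Mat3) (Glim : (Fin 3 → ℝ) → Mat3)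
    (hGmeas : ∀ h : ℝ, 0 < h → Measurable (G h))
    (hGbdd : ∃ K : ℝ, ∀ h : ℝ, 0 < h →
      ∀ᵐ x ∂(volume.restrict Ω), frob3 (G h x) ≤ K)
    (hGconv : ∀ ε : ℝ, 0 < ε → ∃ δ : ℝ, 0 < δ ∧ ∀ h : ℝ, 0 < h → h < δ →
      ∀ᵐ x ∂(volume.restrict Ω), frob3 (G h x - Glim x) ≤ ε) :
    Filter.Tendsto
      (fun h : ℝ => (h ^ 2)⁻¹ * ∫ x in Ω, W (Id3 + h • G h x) ∂volume)
      (nhdsWithin 0 (Set.Ioi 0))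
      (nhds ((1 / 2) *
        ∫ x in Ω, (iteratedFDerivWithin ℝ 2 W U Id3) ![Glim x, Glim x] ∂volume)) := by
  obtain ⟨K, hK⟩ := hGbdd
  have : IsFiniteMeasure (volume.restrict Ω) := isFiniteMeasure_restrict.2 hΩfin.ne
  have hU : U ∈ 𝓝 Id3 := hUopen.mem_nhds hIU
  have hmin : IsLocalMin W Id3 := mem_of_superset hU fun F hF => hWI ▸ hWnonneg F hF
  have hTaylor : TendstoUniformlyOn (fun h A => (h ^ 2)⁻¹ * W (Id3 + h • A))
      (fun A => 1 / 2 * fderiv ℝ (fderiv ℝ W) Id3 A A) (𝓝[>] 0) (closedBall 0 K) := by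
    simpa only [hWI, sub_zero] using
      ((hWC2.contDiffAt hU).tendstoUniformlyOn_inv_sq_mul_sub hmin.fderiv_eq_zero K).mono_left
        (nhdsWithin_mono _ fun h (hh : h ∈ Ioi 0) => ne_of_gt hh)
  have hGball : ∀ᶠ h in 𝓝[>] 0, ∀ᵐ x ∂volume.restrict Ω, G h x ∈ closedBall 0 K :=
    eventually_mem_nhdsWithin.mono fun h hh => (hK h hh).mono fun x hx =>
      mem_closedBall_zero_iff.2 ((norm_le_frob3 _).trans hx)
  have hconv : TendstoUniformlyAE G Glim (𝓝[>] 0) (volume.restrict Ω) := by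
    intro ε hε
    obtain ⟨δ, hδ, hGδ⟩ := hGconv ε hε
    filter_upwards [Ioo_mem_nhdsGT hδ] with h hh
    filter_upwards [hGδ h hh.1 hh.2] with x hx
    exact (dist_eq_norm _ _).trans_le ((norm_le_frob3 _).trans hx)
  have hFm : ∀ᶠ h in 𝓝[>] 0,
      AEStronglyMeasurable (fun x => (h ^ 2)⁻¹ * W (Id3 + h • G h x)) (volume.restrict Ω) := by
    filter_upwards [hGball, eventually_mem_nhdsWithin, nhdsWithin_le_nhds
      (eventually_forall_closedBall_smul (P := fun A => Id3 + A ∈ U)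
        (((continuous_const_add Id3).tendsto' 0 Id3 (add_zero _)).eventually_mem hU) K)]
      with h hGh hh hUh
    exact (hWC2.continuousOn.aestronglyMeasurable_comp hUopen.measurableSet
      (((hGmeas h hh).const_smul h).const_add Id3).aemeasurable
      (hGh.mono fun x hx => hUh _ hx)).const_mul _
  rw [iteratedFDerivWithin_of_isOpen 2 hUopen hIU, ← integral_const_mul]
  simp only [iteratedFDeriv_two_apply, ← integral_const_mul]
  exact (hconv.comp_tendstoUniformlyOn hGball (hconv.ae_mem isClosed_closedBall hGball) hTaylor
    ((isCompact_closedBall 0 K).uniformContinuousOn_of_continuous (by fun_prop))).tendsto_integral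
    hFm
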